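/- For every starting point z = (x₀, y₀) with x₀ ≥ 1 and y₀ ≥ 1, the walk started at z almost surely hits the boundary in finite time: P_z(τ < ∞) = 1. -/

import Mathlib

/-- The step set of the walk: each increment is `(1,0)`, `(−1,1)` or `(0,−1)`. -/
def stepSet : Set (ℤ × ℤ) := {(1, 0), (-1, 1), (0, -1)}

/-- The boundary of the nonnegative quadrant: points with a zero coordinate. -/
def onBoundary (p : ℤ × ℤ) : Prop := p.1 = 0 ∨ p.2 = 0

/-- The position after `k` steps of the walk started at `z` with increment sequence `w`. -/
def walkPos (z : ℤ × ℤ) {n : ℕ} (w : Fin n → ℤ × ℤ) (k : ℕ) : ℤ × ℤ :=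
  z + ∑ i ∈ Finset.univ.filter (fun i : Fin n => (i : ℕ) < k), w i

/-- The number of `n`-step increment sequences (with steps in `stepSet`) whose walk started
at `z` stays off the boundary strictly before time `n` and whose position at time `n`
satisfies `P`.  Each such trajectory has probability `(1/3)^n` under the i.i.d. uniform
step distribution. -/
noncomputable def firstHitCount (z : ℤ × ℤ) (P : ℤ × ℤ → Prop) (n : ℕ) : ℕ :=
  Nat.card {w : Fin n → ℤ × ℤ //
    (∀ i, w i ∈ stepSet) ∧ (∀ k < n, ¬ onBoundary (walkPos z w k)) ∧ P (walkPos z w n)}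

/-- `hitProb z P = P_z(τ < ∞ and X_τ satisfies P)`: the probability that the walk started
at `z`, with i.i.d. increments uniform on `stepSet`, first hits the boundary `∂` at a point
satisfying `P`.  It is computed by decomposing the event over the value `n` of the hitting
time `τ`. -/
noncomputable def hitProb (z : ℤ × ℤ) (P : ℤ × ℤ → Prop) : ℝ :=
  ∑' n : ℕ, (1/3 : ℝ) ^ n * firstHitCount z P n

/-!
At every point the three steps change the product `x y` by `y`, `x - y - 1` and `-x`, so its
expected increment is `-1/3`: `X_n Y_n + n/3` is a martingale up to `τ`. Since `x y ≥ 0` on the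
quadrant, optional stopping gives `E_z[τ] = ∑_{n ≥ 1} P_z(τ ≥ n) ≤ 3 x₀ y₀`, so `P_z(τ ≥ n) → 0`,
and the probabilities `P_z(τ = n) = P_z(τ ≥ n) - P_z(τ ≥ n + 1)` sum to `P_z(τ ≥ 0) = 1`.
-/

open Finset Filter Topology

def steps : Finset (ℤ × ℤ) := {(1, 0), (-1, 1), (0, -1)}

lemma coe_steps : (steps : Set (ℤ × ℤ)) = stepSet := by simp [steps, stepSet]

instance : DecidablePred onBoundary := fun p => inferInstanceAs (Decidable (p.1 = 0 ∨ p.2 = 0))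

section walkPos

variable (z : ℤ × ℤ)

lemma walkPos_zero {n : ℕ} (w : Fin n → ℤ × ℤ) : walkPos z w 0 = z := by
  simp [walkPos]

lemma walkPos_init {n : ℕ} (w : Fin (n + 1) → ℤ × ℤ) {k : ℕ} (hk : k ≤ n) :
    walkPos z (Fin.init w) k = walkPos z w k := by
  simp only [walkPos, sum_filter, Fin.sum_univ_castSucc, Fin.val_last, Fin.val_castSucc]
  simp [Fin.init, show ¬ n < k by omega]

lemma walkPos_succ_last {n : ℕ} (w : Fin (n + 1) → ℤ × ℤ) :
    walkPos z w (n + 1) = walkPos z (Fin.init w) n + w (Fin.last n) := by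
  simp only [walkPos, sum_filter, Fin.sum_univ_castSucc, Fin.val_last, Fin.val_castSucc]
  simp [Fin.init, add_assoc]

lemma walkPos_snoc_last {n : ℕ} (w : Fin n → ℤ × ℤ) (s : ℤ × ℤ) :
    walkPos z (Fin.snoc w s : Fin (n + 1) → ℤ × ℤ) (n + 1) = walkPos z w n + s := by
  rw [walkPos_succ_last, Fin.init_snoc, Fin.snoc_last]

end walkPos

section AvoidingPaths

variable (S : Finset (ℤ × ℤ)) (B : ℤ × ℤ → Prop) [DecidablePred B] (z : ℤ × ℤ)

def avoidingPaths (n : ℕ) : Finset (Fin n → ℤ × ℤ) :=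
  {w ∈ Fintype.piFinset fun _ => S | ∀ k < n, ¬ B (walkPos z w k)}

lemma avoidingPaths_zero : avoidingPaths S B z 0 = {Fin.elim0} :=
  eq_singleton_iff_unique_mem.2
    ⟨by simp [avoidingPaths, eq_iff_true_of_subsingleton], fun _ _ => Subsingleton.elim _ _⟩

lemma avoidingPaths_succ (n : ℕ) :
    avoidingPaths S B z (n + 1) =
      (S ×ˢ {w ∈ avoidingPaths S B z n | ¬ B (walkPos z w n)}).map
        (Fin.snocEquiv fun _ => ℤ × ℤ).toEmbedding := by
  have hS : Fin.init (fun _ : Fin (n + 1) => S) = fun _ => S := rfl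
  calc avoidingPaths S B z (n + 1)
      = {w ∈ Fintype.piFinset fun _ : Fin (n + 1) => S |
          (Fin.init w : Fin n → ℤ × ℤ) ∈ avoidingPaths S B z n ∧
            ¬ B (walkPos z (Fin.init w : Fin n → ℤ × ℤ) n)} := by
        refine filter_congr fun w hw => ?_
        simp only [avoidingPaths, mem_filter, Fintype.mem_piFinset] at hw ⊢
        simp only [Fin.init, hw, implies_true, true_and]
        rw [Nat.forall_lt_succ_right, walkPos_init z w le_rfl]
        exact and_congr_left' (forall₂_congr fun k hk => by rw [walkPos_init z w hk.le])
    _ = _ := by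
        rw [filter_piFinset_eq_map_snocEquiv (fun _ => S)
          (fun w => w ∈ avoidingPaths S B z n ∧ ¬ B (walkPos z w n)), hS]
        congr 2
        ext w
        simp [avoidingPaths, and_assoc]

lemma sum_avoidingPaths_succ {M : Type*} [AddCommMonoid M] (g : ℤ × ℤ → M) (n : ℕ) :
    ∑ w ∈ avoidingPaths S B z (n + 1), g (walkPos z w (n + 1)) =
      ∑ w ∈ avoidingPaths S B z n with ¬ B (walkPos z w n), ∑ s ∈ S, g (walkPos z w n + s) := by
  rw [avoidingPaths_succ, sum_map, sum_product_right]
  exact sum_congr rfl fun w _ => sum_congr rfl fun s _ => congrArg g (walkPos_snoc_last z w s)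

lemma card_avoidingPaths_succ (n : ℕ) :
    #(avoidingPaths S B z (n + 1)) = #S * #{w ∈ avoidingPaths S B z n | ¬ B (walkPos z w n)} := by
  rw [avoidingPaths_succ, card_map, card_product]

end AvoidingPaths

lemma firstHitCount_eq_card (z : ℤ × ℤ) (P : ℤ × ℤ → Prop) [DecidablePred P] (n : ℕ) :
    firstHitCount z P n = #{w ∈ avoidingPaths steps onBoundary z n | P (walkPos z w n)} := by
  rw [firstHitCount, ← Nat.card_eq_finsetCard]
  exact Nat.card_congr <| Equiv.subtypeEquivRight fun w => by
    simp [avoidingPaths, Fintype.mem_piFinset, ← coe_steps, and_assoc]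

lemma walkPos_nonneg_of_mem_avoidingPaths {z : ℤ × ℤ} (hz₁ : 0 ≤ z.1) (hz₂ : 0 ≤ z.2) {n : ℕ}
    {w : Fin n → ℤ × ℤ} (hw : w ∈ avoidingPaths steps onBoundary z n) :
    0 ≤ (walkPos z w n).1 ∧ 0 ≤ (walkPos z w n).2 := by
  induction n with
  | zero => simpa [walkPos_zero] using ⟨hz₁, hz₂⟩
  | succ n ih =>
    rw [avoidingPaths_succ] at hw
    obtain ⟨⟨s, v⟩, hsv, rfl⟩ := mem_map.1 hw
    simp only [mem_product, mem_filter] at hsv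
    obtain ⟨hs, hv, hvB⟩ := hsv
    have hvpos := ih hv
    simp only [onBoundary, not_or] at hvB
    simp only [steps, mem_insert, mem_singleton] at hs
    rw [Equiv.coe_toEmbedding, show (Fin.snocEquiv fun _ => ℤ × ℤ) (s, v) = Fin.snoc v s from rfl,
      walkPos_snoc_last]
    rcases hs with rfl | rfl | rfl <;> dsimp only [Prod.fst_add, Prod.snd_add] <;> omega

lemma sum_steps_mul (p : ℤ × ℤ) :
    ∑ s ∈ steps, (p + s).1 * (p + s).2 = 3 * (p.1 * p.2) - 1 := by
  rw [steps, sum_insert (by decide), sum_insert (by decide), sum_singleton]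
  simp only [Prod.fst_add, Prod.snd_add]
  ring

lemma card_steps : #steps = 3 := rfl

-- `3^n E_z[X_n Y_n; τ ≥ n]`
def potentialSum (z : ℤ × ℤ) (n : ℕ) : ℤ :=
  ∑ w ∈ avoidingPaths steps onBoundary z n, (walkPos z w n).1 * (walkPos z w n).2

lemma potentialSum_succ (z : ℤ × ℤ) (n : ℕ) :
    potentialSum z (n + 1) +
        #{w ∈ avoidingPaths steps onBoundary z n | ¬ onBoundary (walkPos z w n)} =
      3 * potentialSum z n := by
  have h := sum_avoidingPaths_succ steps onBoundary z (fun p => p.1 * p.2) n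
  simp only [sum_steps_mul] at h
  rw [potentialSum, potentialSum, h, sum_sub_distrib, ← mul_sum, sum_const, nsmul_one,
    sum_filter_of_ne]
  · ring
  · intro w _ hne hB
    rcases hB with hB | hB <;> simp [hB] at hne

lemma potentialSum_nonneg {z : ℤ × ℤ} (hz₁ : 0 ≤ z.1) (hz₂ : 0 ≤ z.2) (n : ℕ) :
    0 ≤ potentialSum z n :=
  sum_nonneg fun _ hw =>
    mul_nonneg (walkPos_nonneg_of_mem_avoidingPaths hz₁ hz₂ hw).1
      (walkPos_nonneg_of_mem_avoidingPaths hz₁ hz₂ hw).2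

-- `P_z(τ ≥ n)`: every `n`-step path has probability `(1/3)^n`.
noncomputable def survivalProb (z : ℤ × ℤ) (n : ℕ) : ℝ :=
  #(avoidingPaths steps onBoundary z n) / 3 ^ n

lemma survivalProb_nonneg (z : ℤ × ℤ) (n : ℕ) : 0 ≤ survivalProb z n := by
  unfold survivalProb
  positivity

lemma survivalProb_zero (z : ℤ × ℤ) : survivalProb z 0 = 1 := by
  simp [survivalProb, avoidingPaths_zero]

lemma survivalProb_succ (z : ℤ × ℤ) (n : ℕ) :
    survivalProb z (n + 1) =
      #{w ∈ avoidingPaths steps onBoundary z n | ¬ onBoundary (walkPos z w n)} / 3 ^ n := by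
  rw [survivalProb, card_avoidingPaths_succ, card_steps, pow_succ]
  push_cast
  field_simp

lemma firstHitCount_div_eq (z : ℤ × ℤ) (n : ℕ) :
    (1 / 3 : ℝ) ^ n * firstHitCount z onBoundary n = survivalProb z n - survivalProb z (n + 1) := by
  have h := card_filter_add_card_filter_not (s := avoidingPaths steps onBoundary z n)
    fun w => onBoundary (walkPos z w n)
  rw [survivalProb_succ, survivalProb, firstHitCount_eq_card, ← h, one_div_pow]
  push_cast
  field_simp
  ring

lemma sum_survivalProb_add_potentialSum (z : ℤ × ℤ) (n : ℕ) :
    ∑ k ∈ range n, survivalProb z (k + 1) + 3 * potentialSum z n / 3 ^ n = 3 * (z.1 * z.2) := by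
  induction n with
  | zero => simp [potentialSum, avoidingPaths_zero, walkPos_zero]
  | succ n ih =>
    rw [sum_range_succ, ← ih, survivalProb_succ, pow_succ]
    have h := potentialSum_succ z n
    rw [← @Int.cast_inj ℝ] at h
    push_cast at h
    field_simp
    linarith

lemma tendsto_survivalProb {z : ℤ × ℤ} (hz₁ : 0 ≤ z.1) (hz₂ : 0 ≤ z.2) :
    Tendsto (survivalProb z) atTop (𝓝 0) := by
  have hsum : Summable fun k => survivalProb z (k + 1) := by
    refine summable_of_sum_range_le (c := 3 * (z.1 * z.2)) (fun k => survivalProb_nonneg z _)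
      fun n => ?_
    have := sum_survivalProb_add_potentialSum z n
    have : (0 : ℝ) ≤ 3 * potentialSum z n / 3 ^ n := by
      have := potentialSum_nonneg hz₁ hz₂ n
      positivity
    linarith
  exact ((summable_nat_add_iff 1).1 hsum).tendsto_atTop_zero

/-- The walk started at any interior point `z = (x₀,y₀)`, `x₀ ≥ 1`, `y₀ ≥ 1`, almost surely
hits the boundary in finite time: `P_z(τ < ∞) = 1`. -/
theorem walk_hits_boundary (z : ℤ × ℤ) (hx : 1 ≤ z.1) (hy : 1 ≤ z.2) :
    hitProb z onBoundary = 1 := by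
  have hsum : HasSum (fun n => (1 / 3 : ℝ) ^ n * firstHitCount z onBoundary n) 1 := by
    rw [hasSum_iff_tendsto_nat_of_nonneg (fun n => by positivity)]
    simp_rw [firstHitCount_div_eq, sum_range_sub', survivalProb_zero]
    simpa using (tendsto_survivalProb (by omega) (by omega)).const_sub (1 : ℝ)
  exact hsum.tsum_eq
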